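/- Confluence is equivalent to first-page convergence: Let (R, W, d) be a filtered presentation of vector spaces over a field K in which every relator is a reduction relator, and assume the associated rewriting relation → on W terminates. Then → is confluent if and only if the presentation is E¹-convergent. -/

import Mathlib

/-- A *filtered presentation of vector spaces* over a field `K`: `K`-vector spaces `R` and `W`,
a basis of `W` indexed by `I` whose elements are called *webs*, together with a degree
function `deg : I → ℕ`, a basis of `R` indexed by `P` whose elements are called *relators*,
and a `K`-linear map `d : R → W` with `d [r] ≠ 0` for every relator `r`. -/
structure FilteredPresentation (K W R I P : Type*) [Field K]
    [AddCommGroup W] [Module K W] [AddCommGroup R] [Module K R] where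
  /-- the basis of webs -/
  web : Module.Basis I K W
  /-- the degree of each web -/
  deg : I → ℕ
  /-- the basis of relators -/
  rel : Module.Basis P K R
  /-- the structure map of the presentation -/
  d : R →ₗ[K] W
  /-- `d` is nonzero on every relator -/
  d_rel_ne_zero : ∀ p : P, d (rel p) ≠ 0

namespace FilteredPresentation

variable {K W R I P : Type*} [Field K]
  [AddCommGroup W] [Module K W] [AddCommGroup R] [Module K R]
  (FP : FilteredPresentation K W R I P)

/-- `FₙW` : the span of the webs of degree at most `n`. -/
def FWle (n : ℕ) : Submodule K W :=
  Submodule.span K ((fun i => FP.web i) '' {i | FP.deg i ≤ n})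

/-- `Fₙ₋₁W` : the span of the webs of degree strictly less than `n`
(so its value at `n = 0` is `F₋₁W = 0`). -/
def FWlt (n : ℕ) : Submodule K W :=
  Submodule.span K ((fun i => FP.web i) '' {i | FP.deg i < n})

/-- The degree `|r|` of a relator: the least `n` such that `d [r] ∈ FₙW`. -/
noncomputable def rdeg (p : P) : ℕ :=
  sInf {n : ℕ | FP.d (FP.rel p) ∈ FP.FWle n}

/-- `Fₙ₋₁R` : the span of the relators of degree strictly less than `n`. -/
def FRlt (n : ℕ) : Submodule K R :=
  Submodule.span K ((fun p => FP.rel p) '' {p | FP.rdeg p < n})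

/-- The *leading term* at filtration level `n` of an element `x` of `R`: the class of `d x`
in `W ⧸ Fₙ₋₁W`.  (For a relator of degree `n` this class lies in `grₙW = FₙW/Fₙ₋₁W`,
realized inside the ambient quotient `W ⧸ Fₙ₋₁W`.) -/
def lead (n : ℕ) (x : R) : W ⧸ FP.FWlt n :=
  (FP.FWlt n).mkQ (FP.d x)

/-- A relator is a *reduction relator* if its leading term is the class of a single web
(necessarily of degree `|r|`). -/
def IsReductionRel (p : P) : Prop :=
  ∃ i : I, FP.deg i = FP.rdeg p ∧
    FP.lead (FP.rdeg p) (FP.rel p) = (FP.FWlt (FP.rdeg p)).mkQ (FP.web i)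

/-- A relator is a *horizontal relator* if its leading term is the difference `u - v` of the
classes of two distinct webs (necessarily of degree `|r|`). -/
def IsHorizontalRel (p : P) : Prop :=
  ∃ i j : I, i ≠ j ∧ FP.deg i = FP.rdeg p ∧ FP.deg j = FP.rdeg p ∧
    FP.lead (FP.rdeg p) (FP.rel p) =
      (FP.FWlt (FP.rdeg p)).mkQ (FP.web i) - (FP.FWlt (FP.rdeg p)).mkQ (FP.web j)

/-- A *canceling sequence* of degree `n`: a (nonempty) finite sequence `s₁, …, s_m` of
signed relators of degree `n` (each `sᵢ` is `±[r]` for a relator `r` of degree `n`),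
together with elements `w₀, w₁, …, w_m` of `W ⧸ Fₙ₋₁W`, each either `0` or the class of a
single web of degree `n`, with `w₁, …, w_{m-1}` nonzero, `w₀ = w_m`, and such that the
leading term of `sᵢ` is `wᵢ - wᵢ₋₁` for all `i`. -/
structure CancelingSeq (n : ℕ) where
  /-- the underlying list `s₁, …, s_m` of signed relators -/
  s : List R
  /-- the witnessing list `w₀, w₁, …, w_m` -/
  w : List (W ⧸ FP.FWlt n)
  nonempty : 0 < s.length
  len : w.length = s.length + 1
  signed : ∀ x ∈ s, ∃ p : P, (x = FP.rel p ∨ x = -FP.rel p) ∧ FP.rdeg p = n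
  w_mem : ∀ u ∈ w, u = 0 ∨ ∃ i : I, FP.deg i = n ∧ u = (FP.FWlt n).mkQ (FP.web i)
  w_mid_ne : ∀ k : ℕ, 0 < k → k < s.length → w.getD k 0 ≠ 0
  w_cycle : w.getD 0 0 = w.getD s.length 0
  lead_step : ∀ k < s.length,
    FP.lead n (s.getD k 0) = w.getD (k + 1) 0 - w.getD k 0

namespace CancelingSeq

variable {FP} {n : ℕ}

/-- `Σs` : the sum `s₁ + ⋯ + s_m ∈ R` of the signed relators of a canceling sequence. -/
def total (c : FP.CancelingSeq n) : R := c.s.sum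

/-- A canceling sequence is a *reduction sequence* if `w₀ = w_m = 0`. -/
def IsReductionSeq (c : FP.CancelingSeq n) : Prop :=
  c.w.getD 0 0 = 0 ∧ c.w.getD c.s.length 0 = 0

/-- A canceling sequence is a *horizontal sequence* if it is not a reduction sequence. -/
def IsHorizontalSeq (c : FP.CancelingSeq n) : Prop :=
  ¬ c.IsReductionSeq

/-- A canceling sequence `s` of degree `n` is *consistently reducible* if there exists
`y ∈ Fₙ₋₁R` with `d y = d (Σs)`. -/
def ConsistentlyReducible (c : FP.CancelingSeq n) : Prop :=
  ∃ y ∈ FP.FRlt n, FP.d y = FP.d c.total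

end CancelingSeq

/-- The presentation is *E¹-convergent* (its associated two-column spectral sequence
converges at the first page) if for every `n ∈ ℕ` and every `x` in the span of the
relators of degree exactly `n` with `d x ∈ Fₙ₋₁W`, there exists `y ∈ Fₙ₋₁R` with
`d y = d x`. -/
def E1Convergent : Prop :=
  ∀ n : ℕ, ∀ x ∈ Submodule.span K ((fun p => FP.rel p) '' {p | FP.rdeg p = n}),
    FP.d x ∈ FP.FWlt n → ∃ y ∈ FP.FRlt n, FP.d y = FP.d x

end FilteredPresentation

namespace FilteredPresentation

variable {K W R I P : Type*} [Field K]
  [AddCommGroup W] [Module K W] [AddCommGroup R] [Module K R]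
  (FP : FilteredPresentation K W R I P)

/-- The rewriting relation associated to a presentation all of whose relators are reduction
relators: `x → y` if and only if there is a relator `r` whose leading term is the class of a
web `w` such that the coefficient `c` of `w` in the basis expansion of `x` is nonzero and
`y = x - c • d [r]`. -/
noncomputable def Rw (x y : W) : Prop :=
  ∃ (p : P) (i : I), FP.deg i = FP.rdeg p ∧
    FP.lead (FP.rdeg p) (FP.rel p) = (FP.FWlt (FP.rdeg p)).mkQ (FP.web i) ∧
    FP.web.repr x i ≠ 0 ∧
    y = x - FP.web.repr x i • FP.d (FP.rel p)

end FilteredPresentation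


/-!
Under confluence, joinability is an equivalence; since `x` and `x + c • d [r]` are always
joinable and `0` is irreducible, every element of the image of `d` rewrites to `0`. A rewriting
step on an element of `Fₙ₋₁W` only uses relators of degree `< n`, so the chain `d x →* 0`
exhibits `d x` as `d y` with `y ∈ Fₙ₋₁R`.

Conversely, by termination every element has a normal form, and two normal forms of the same
element differ by a reduced element of the image of `d`. Such an element vanishes by induction
on the filtration of `R`: write it as `d (x + u)` with `x` spanned by relators of degree `n` and
`u ∈ Fₙ₋₁R`. The coefficient of `d x` on a web of degree `n` vanishes (on a leading web by
reducedness, on any other web because no relator of degree `n` involves it), so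
`d x ∈ Fₙ₋₁W`, and `E¹`-convergence replaces `x` by an element of `Fₙ₋₁R`.
-/

theorem Relation.exists_reflTransGen_forall_not_of_wellFounded {α : Type*} {r : α → α → Prop}
    (h : WellFounded (flip r)) (a : α) :
    ∃ b, Relation.ReflTransGen r a b ∧ ∀ c, ¬ r b c := by
  obtain ⟨b, hab, hb⟩ := h.has_min {b | Relation.ReflTransGen r a b} ⟨a, .refl⟩
  exact ⟨b, hab, fun c hbc => hb c (hab.tail hbc) hbc⟩

theorem Module.Basis.mem_span_image_iff_forall {ι R M : Type*} [Semiring R] [AddCommMonoid M]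
    [Module R M] (b : Module.Basis ι R M) {s : Set ι} {m : M} :
    m ∈ Submodule.span R (b '' s) ↔ ∀ i, b.repr m i ≠ 0 → i ∈ s := by
  simp only [b.mem_span_image, Set.subset_def, Finset.mem_coe, Finsupp.mem_support_iff]

namespace FilteredPresentation

open Relation

variable {K W R I P : Type*} [Field K]
  [AddCommGroup W] [Module K W] [AddCommGroup R] [Module K R]
  (FP : FilteredPresentation K W R I P)

theorem mem_FWle_iff {x : W} {n : ℕ} :
    x ∈ FP.FWle n ↔ ∀ i, FP.web.repr x i ≠ 0 → FP.deg i ≤ n :=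
  FP.web.mem_span_image_iff_forall

theorem mem_FWlt_iff {x : W} {n : ℕ} :
    x ∈ FP.FWlt n ↔ ∀ i, FP.web.repr x i ≠ 0 → FP.deg i < n :=
  FP.web.mem_span_image_iff_forall

theorem repr_eq_zero_of_mem_FWlt {x : W} {n : ℕ} (hx : x ∈ FP.FWlt n) {i : I}
    (hi : n ≤ FP.deg i) : FP.web.repr x i = 0 := by
  by_contra h
  exact (FP.mem_FWlt_iff.mp hx i h).not_ge hi

theorem exists_mem_FWle (x : W) : ∃ n, x ∈ FP.FWle n :=
  ⟨(FP.web.repr x).support.sup FP.deg, FP.mem_FWle_iff.mpr fun _ hi =>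
    Finset.le_sup (Finsupp.mem_support_iff.mpr hi)⟩

theorem FWle_le_FWlt {m n : ℕ} (h : m < n) : FP.FWle m ≤ FP.FWlt n := fun _ hx =>
  FP.mem_FWlt_iff.mpr fun i hi => (FP.mem_FWle_iff.mp hx i hi).trans_lt h

theorem d_rel_mem_FWle (p : P) : FP.d (FP.rel p) ∈ FP.FWle (FP.rdeg p) :=
  Nat.sInf_mem (FP.exists_mem_FWle _)

theorem exists_mem_FRlt (u : R) : ∃ n, u ∈ FP.FRlt n :=
  ⟨(FP.rel.repr u).support.sup FP.rdeg + 1, FP.rel.mem_span_image_iff_forall.mpr fun _ hp =>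
    Nat.lt_succ_of_le (Finset.le_sup (Finsupp.mem_support_iff.mpr hp))⟩

theorem FRlt_zero : FP.FRlt 0 = ⊥ := by
  simp [FRlt]

theorem d_mem_FWlt_of_mem_FRlt {n : ℕ} {u : R} (hu : u ∈ FP.FRlt n) : FP.d u ∈ FP.FWlt n := by
  refine (Submodule.span_le (p := (FP.FWlt n).comap FP.d)).mpr ?_ hu
  rintro _ ⟨p, hp, rfl⟩
  exact FP.FWle_le_FWlt hp (FP.d_rel_mem_FWle p)

def FReq (n : ℕ) : Submodule K R :=
  Submodule.span K ((fun p => FP.rel p) '' {p | FP.rdeg p = n})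

theorem FRlt_succ (n : ℕ) : FP.FRlt (n + 1) = FP.FReq n ⊔ FP.FRlt n := by
  rw [FRlt, FReq, FRlt, ← Submodule.span_union, ← Set.image_union]
  congr 2
  ext p
  simp only [Set.mem_ofPred_eq, Set.mem_union]
  omega

theorem d_mem_FWle_of_mem_FReq {n : ℕ} {x : R} (hx : x ∈ FP.FReq n) : FP.d x ∈ FP.FWle n := by
  refine (Submodule.span_le (p := (FP.FWle n).comap FP.d)).mpr ?_ hx
  rintro _ ⟨p, rfl, rfl⟩
  exact FP.d_rel_mem_FWle p

def IsLeading (p : P) (i : I) : Prop :=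
  FP.deg i = FP.rdeg p ∧
    FP.lead (FP.rdeg p) (FP.rel p) = (FP.FWlt (FP.rdeg p)).mkQ (FP.web i)

theorem repr_d_rel_of_isLeading {p : P} {i j : I} (hpi : FP.IsLeading p i)
    (hj : FP.deg j = FP.rdeg p) : FP.web.repr (FP.d (FP.rel p)) j = Finsupp.single i 1 j := by
  have hsub : FP.d (FP.rel p) - FP.web i ∈ FP.FWlt (FP.rdeg p) :=
    (Submodule.Quotient.eq _).mp hpi.2
  have h := FP.repr_eq_zero_of_mem_FWlt hsub hj.ge
  rwa [map_sub, Finsupp.sub_apply, FP.web.repr_self, sub_eq_zero] at h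

theorem repr_d_eq_zero_of_forall_not_isLeading (hred : ∀ p : P, FP.IsReductionRel p)
    {n : ℕ} {x : R} (hx : x ∈ FP.FReq n) {j : I} (hj : FP.deg j = n)
    (hnot : ∀ p, ¬ FP.IsLeading p j) : FP.web.repr (FP.d x) j = 0 := by
  induction hx using Submodule.span_induction with
  | mem _ h =>
    obtain ⟨p, hp, rfl⟩ := h
    obtain ⟨i, hpi⟩ := hred p
    rw [FP.repr_d_rel_of_isLeading hpi (hj.trans hp.symm)]
    exact Finsupp.single_eq_of_ne fun hij => hnot p (hij ▸ hpi)
  | zero => simp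
  | add _ _ _ _ hx hy => simp [hx, hy]
  | smul _ _ _ hx => simp [hx]

def IsReduced (v : W) : Prop := ∀ w, ¬ FP.Rw v w

theorem isReduced_iff {v : W} :
    FP.IsReduced v ↔ ∀ p i, FP.IsLeading p i → FP.web.repr v i = 0 := by
  refine ⟨fun hv p i hpi => ?_, fun hv w ⟨p, i, hdeg, hlead, hne, _⟩ => hne (hv p i ⟨hdeg, hlead⟩)⟩
  by_contra hne
  exact hv _ ⟨p, i, hpi.1, hpi.2, hne, rfl⟩

variable {FP} in
theorem IsReduced.sub {v w : W} (hv : FP.IsReduced v) (hw : FP.IsReduced w) :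
    FP.IsReduced (v - w) :=
  FP.isReduced_iff.mpr fun p i hpi => by
    rw [map_sub, Finsupp.sub_apply, FP.isReduced_iff.mp hv p i hpi,
      FP.isReduced_iff.mp hw p i hpi, sub_zero]

theorem isReduced_zero : FP.IsReduced 0 :=
  FP.isReduced_iff.mpr fun _ _ _ => by simp

variable {FP} in
theorem IsReduced.eq_of_reflTransGen {v w : W} (hv : FP.IsReduced v)
    (h : ReflTransGen FP.Rw v w) : w = v := by
  rcases h.cases_head with rfl | ⟨u, hvu, -⟩
  · rfl
  · exact (hv u hvu).elim

variable {FP} in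
theorem Rw.exists_mem_FRlt {v w : W} (h : FP.Rw v w) {n : ℕ} (hv : v ∈ FP.FWlt n) :
    ∃ y ∈ FP.FRlt n, FP.d y = v - w := by
  obtain ⟨p, i, hdeg, -, hne, rfl⟩ := h
  have hp : FP.rdeg p < n := hdeg ▸ FP.mem_FWlt_iff.mp hv i hne
  exact ⟨FP.web.repr v i • FP.rel p,
    Submodule.smul_mem _ _ (Submodule.subset_span ⟨p, hp, rfl⟩), by rw [map_smul, sub_sub_cancel]⟩

theorem exists_mem_FRlt_of_reflTransGen {v w : W} (h : ReflTransGen FP.Rw v w) {n : ℕ}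
    (hv : v ∈ FP.FWlt n) : ∃ y ∈ FP.FRlt n, FP.d y = v - w := by
  induction h using ReflTransGen.head_induction_on with
  | refl => exact ⟨0, zero_mem _, by simp⟩
  | @head v u hvu _ ih =>
    obtain ⟨y, hy, hdy⟩ := hvu.exists_mem_FRlt hv
    have hu : u ∈ FP.FWlt n := by
      rw [← sub_sub_cancel v u, ← hdy]
      exact sub_mem hv (FP.d_mem_FWlt_of_mem_FRlt hy)
    obtain ⟨y', hy', hdy'⟩ := ih hu
    exact ⟨y + y', add_mem hy hy', by rw [map_add, hdy, hdy', sub_add_sub_cancel]⟩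

theorem sub_mem_range_of_reflTransGen {v w : W} (h : ReflTransGen FP.Rw v w) :
    v - w ∈ LinearMap.range FP.d := by
  obtain ⟨n, hn⟩ := FP.exists_mem_FWle v
  obtain ⟨y, -, hy⟩ := FP.exists_mem_FRlt_of_reflTransGen h (FP.FWle_le_FWlt n.lt_succ_self hn)
  exact ⟨y, hy⟩

theorem reflTransGen_sub_repr_smul {p : P} {i : I} (hpi : FP.IsLeading p i) (x : W) :
    ReflTransGen FP.Rw x (x - FP.web.repr x i • FP.d (FP.rel p)) := by
  by_cases hx : FP.web.repr x i = 0
  · rw [hx, zero_smul, sub_zero]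
  · exact .single ⟨p, i, hpi.1, hpi.2, hx, rfl⟩

/-- Both `x` and `x + c • d [r]` reduce to `x` with its coefficient on the leading web of `r`
removed. -/
theorem join_add_smul_d_rel {p : P} (hp : FP.IsReductionRel p) (x : W) (c : K) :
    Join (ReflTransGen FP.Rw) x (x + c • FP.d (FP.rel p)) := by
  obtain ⟨i, hpi⟩ := hp
  have hcoef : FP.web.repr (x + c • FP.d (FP.rel p)) i = FP.web.repr x i + c := by
    rw [map_add, map_smul, Finsupp.add_apply, Finsupp.smul_apply,
      FP.repr_d_rel_of_isLeading hpi hpi.1, Finsupp.single_eq_same, smul_eq_mul, mul_one]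
  have h := FP.reflTransGen_sub_repr_smul hpi (x + c • FP.d (FP.rel p))
  rw [hcoef, add_smul, add_sub_add_right_eq_sub] at h
  exact ⟨_, FP.reflTransGen_sub_repr_smul hpi x, h⟩

theorem join_add_d (hred : ∀ p : P, FP.IsReductionRel p)
    (hconf : ∀ x y z : W, ReflTransGen FP.Rw x y → ReflTransGen FP.Rw x z →
      Join (ReflTransGen FP.Rw) y z) (x : W) (r : R) :
    Join (ReflTransGen FP.Rw) x (x + FP.d r) := by
  have := isTrans_join hconf
  rw [← FP.rel.linearCombination_repr r]
  generalize FP.rel.repr r = f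
  induction f using Finsupp.induction generalizing x with
  | zero => simpa using refl x
  | single_add p c f _ _ ih =>
    rw [map_add, Finsupp.linearCombination_single, map_add, map_smul, ← add_assoc]
    exact _root_.trans (FP.join_add_smul_d_rel (hred p) x c) (ih _)

theorem d_mem_FWlt_of_isReduced (hred : ∀ p : P, FP.IsReductionRel p) {n : ℕ} {x u : R}
    (hx : x ∈ FP.FReq n) (hu : u ∈ FP.FRlt n) (hxu : FP.IsReduced (FP.d (x + u))) :
    FP.d x ∈ FP.FWlt n := by
  refine FP.mem_FWlt_iff.mpr fun j hj => ?_
  refine (FP.mem_FWle_iff.mp (FP.d_mem_FWle_of_mem_FReq hx) j hj).lt_of_ne fun hjn => hj ?_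
  by_cases hlead : ∃ p, FP.IsLeading p j
  · obtain ⟨p, hpj⟩ := hlead
    have hu_j := FP.repr_eq_zero_of_mem_FWlt (FP.d_mem_FWlt_of_mem_FRlt hu) hjn.ge
    simpa [hu_j] using FP.isReduced_iff.mp hxu p j hpj
  · exact FP.repr_d_eq_zero_of_forall_not_isLeading hred hx hjn (not_exists.mp hlead)

theorem eq_zero_of_isReduced_of_mem_FRlt (hred : ∀ p : P, FP.IsReductionRel p)
    (hE1 : FP.E1Convergent) : ∀ (n : ℕ), ∀ u ∈ FP.FRlt n, FP.IsReduced (FP.d u) → FP.d u = 0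
  | 0, u, hu, _ => by rw [FP.FRlt_zero, Submodule.mem_bot] at hu; simp [hu]
  | n + 1, _, hxu, hred_xu => by
    obtain ⟨x, hx, u, hu, rfl⟩ := Submodule.mem_sup.mp (FP.FRlt_succ n ▸ hxu)
    obtain ⟨y, hy, hdy⟩ := hE1 n x hx (FP.d_mem_FWlt_of_isReduced hred hx hu hred_xu)
    have hyu : FP.d (x + u) = FP.d (y + u) := by rw [map_add, map_add, hdy]
    rw [hyu] at hred_xu ⊢
    exact eq_zero_of_isReduced_of_mem_FRlt hred hE1 n _ (add_mem hy hu) hred_xu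

theorem eq_of_isReduced_of_sub_mem_range (hred : ∀ p : P, FP.IsReductionRel p)
    (hE1 : FP.E1Convergent) {v w : W} (hv : FP.IsReduced v) (hw : FP.IsReduced w)
    (hvw : v - w ∈ LinearMap.range FP.d) : v = w := by
  obtain ⟨u, hu⟩ := hvw
  obtain ⟨n, hn⟩ := FP.exists_mem_FRlt u
  rw [← sub_eq_zero, ← hu]
  exact FP.eq_zero_of_isReduced_of_mem_FRlt hred hE1 n u hn (hu ▸ hv.sub hw)

end FilteredPresentation

/-- **Confluence is equivalent to first-page convergence.**
Let `(R, W, d)` be a filtered presentation of vector spaces over a field `K` in which every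
relator is a reduction relator, and assume the associated rewriting relation `→` on `W`
terminates (there is no infinite chain `x₀ → x₁ → x₂ → ⋯`).  Then `→` is confluent if and
only if the presentation is `E¹`-convergent. -/
theorem FilteredPresentation.confluent_iff_e1Convergent
    {K W R I P : Type*} [Field K]
    [AddCommGroup W] [Module K W] [AddCommGroup R] [Module K R]
    (FP : FilteredPresentation K W R I P)
    (hred : ∀ p : P, FP.IsReductionRel p)
    (hterm : ¬ ∃ f : ℕ → W, ∀ k : ℕ, FP.Rw (f k) (f (k + 1))) :
    (∀ x y z : W, Relation.ReflTransGen FP.Rw x y → Relation.ReflTransGen FP.Rw x z →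
        ∃ u : W, Relation.ReflTransGen FP.Rw y u ∧ Relation.ReflTransGen FP.Rw z u) ↔
      FP.E1Convergent := by
  constructor
  · intro hconf n x _ hdx
    obtain ⟨u, h0u, hxu⟩ := FP.join_add_d hred hconf 0 x
    rw [zero_add, FP.isReduced_zero.eq_of_reflTransGen h0u] at hxu
    obtain ⟨y, hy, hdy⟩ := FP.exists_mem_FRlt_of_reflTransGen hxu hdx
    exact ⟨y, hy, by rw [hdy, sub_zero]⟩
  · intro hE1 x y z hxy hxz
    have hwf : WellFounded (flip FP.Rw) :=
      wellFounded_iff_isEmpty_descending_chain.mpr ⟨fun ⟨f, hf⟩ => hterm ⟨f, hf⟩⟩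
    obtain ⟨y', hyy', hy'⟩ := Relation.exists_reflTransGen_forall_not_of_wellFounded hwf y
    obtain ⟨z', hzz', hz'⟩ := Relation.exists_reflTransGen_forall_not_of_wellFounded hwf z
    have hyz : y' - z' ∈ LinearMap.range FP.d := by
      simpa using sub_mem (FP.sub_mem_range_of_reflTransGen (hxz.trans hzz'))
        (FP.sub_mem_range_of_reflTransGen (hxy.trans hyy'))
    obtain rfl := FP.eq_of_isReduced_of_sub_mem_range hred hE1 hy' hz' hyz
    exact ⟨y', hyy', hzz'⟩
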